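/- arXiv:1612.09003 — 4 statements merged into one kernel-verified Lean document; each statement's English description precedes it below -/
import Mathlib

section
/- Every word over the positive integers is strongly Wilf equivalent to its reversal: for any word u, for all n, m, j ∈ ℕ, the number of words w with |w| = n, ‖w‖ = m, and η_u(w) = j equals the number of words w with |w| = n, ‖w‖ = m, and η_{u^R}(w) = j, where u^R denotes the reversal of u. -/
/-- The `n`-th letter (1-indexed) of a word `u`, with the convention that
letters outside the range `{1, …, |u|}` are `0`. -/
def letter (u : List ℕ) (n : ℤ) : ℕ :=
  if 1 ≤ n then u.getD (n - 1).toNat 0 else 0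

/-- A word over the positive integers: every letter is positive. -/
def IsWord (w : List ℕ) : Prop := ∀ x ∈ w, 0 < x

/-- `u` embeds in `w` at (1-indexed) position `i`:
`1 ≤ i ≤ |w| - |u| + 1` and `u_j ≤ w_{i+j-1}` for all `1 ≤ j ≤ |u|`. -/
def EmbedsAt (u w : List ℕ) (i : ℕ) : Prop :=
  1 ≤ i ∧ i + u.length ≤ w.length + 1 ∧
    ∀ j ∈ Finset.Icc 1 u.length, letter u (j : ℤ) ≤ letter w ((i : ℤ) + (j : ℤ) - 1)

instance (u w : List ℕ) : DecidablePred (EmbedsAt u w) := fun i => by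
  unfold EmbedsAt; infer_instance

/-- `η_u(w)`: the number of positions at which `u` embeds in `w`. -/
def eta (u w : List ℕ) : ℕ :=
  ((Finset.Icc 1 (w.length + 1 - u.length)).filter (EmbedsAt u w)).card

/-- Strong Wilf equivalence: for all `n m j`, the number of words of length `n`,
sum `m`, and exactly `j` embeddings of `u` equals that for `v`. -/
def StronglyWilfEquiv (u v : List ℕ) : Prop :=
  ∀ n m j : ℕ,
    {w : List ℕ | IsWord w ∧ w.length = n ∧ w.sum = m ∧ eta u w = j}.ncard =
    {w : List ℕ | IsWord w ∧ w.length = n ∧ w.sum = m ∧ eta v w = j}.ncard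

/-- `w` avoids `u`: there is no position at which `u` embeds in `w`. -/
def Avoids (u w : List ℕ) : Prop := ∀ i : ℕ, ¬ EmbedsAt u w i

/-- Wilf equivalence: for all `n m`, the number of words of length `n` and
sum `m` avoiding `u` equals that for `v`. -/
def WilfEquiv (u v : List ℕ) : Prop :=
  ∀ n m : ℕ,
    {w : List ℕ | IsWord w ∧ w.length = n ∧ w.sum = m ∧ Avoids u w}.ncard =
    {w : List ℕ | IsWord w ∧ w.length = n ∧ w.sum = m ∧ Avoids v w}.ncard

/-- `v` is the rigid shift of `u` at height `h ≥ 1` by the integer `k`. -/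
def IsRigidShift (u v : List ℕ) (h : ℕ) (k : ℤ) : Prop :=
  1 ≤ h ∧ v.length = u.length ∧
  (∀ n : ℤ, h < letter u n → 1 ≤ n + k ∧ n + k ≤ (u.length : ℤ) ∧ h ≤ letter u (n + k)) ∧
  (∀ n : ℤ, 1 ≤ n → n ≤ (v.length : ℤ) →
    letter v n = min h (letter u n) + (letter u (n - k) - h))

/-- Shift equivalence: the smallest equivalence relation relating every word to
its reversal and to each of its rigid shifts. -/
def ShiftEquiv (u v : List ℕ) : Prop :=
  Relation.EqvGen (fun a b => b = a.reverse ∨ ∃ (h : ℕ) (k : ℤ), IsRigidShift a b h k) u v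


lemma letter_reverse (u : List ℕ) (n : ℤ) (h1 : 1 ≤ n) (h2 : n ≤ (u.length : ℤ)) :
    letter u.reverse n = letter u ((u.length : ℤ) + 1 - n) := by
  unfold letter
  have hn : (n - 1).toNat < u.length := by omega
  rw [if_pos h1, if_pos (by omega)]
  rw [List.getD_eq_getElem?_getD, List.getD_eq_getElem?_getD]
  rw [List.getElem?_reverse (by simpa using hn)]
  congr 2
  omega

lemma embedsAt_reverse (u w : List ℕ) (i : ℕ) (h : EmbedsAt u w i) :
    EmbedsAt u.reverse w.reverse (w.length + 2 - u.length - i) := by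
  obtain ⟨h1, h2, h3⟩ := h
  refine ⟨by omega, by simp only [List.length_reverse]; omega, ?_⟩
  intro j hj
  simp only [List.length_reverse, Finset.mem_Icc] at hj ⊢
  have hi' : ((w.length + 2 - u.length - i : ℕ) : ℤ) = (w.length : ℤ) + 2 - u.length - i := by
    omega
  rw [letter_reverse u j (by exact_mod_cast hj.1) (by exact_mod_cast hj.2), hi']
  have hw : letter w.reverse (((w.length : ℤ) + 2 - u.length - i) + (j : ℤ) - 1)
      = letter w ((i : ℤ) + ((u.length : ℤ) + 1 - j) - 1) := by
    rw [letter_reverse w _ (by omega) (by omega)]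
    congr 1
    omega
  rw [hw]
  have hm : (u.length + 1 - j) ∈ Finset.Icc 1 u.length := by
    simp only [Finset.mem_Icc]; omega
  have := h3 (u.length + 1 - j) hm
  have hc : ((u.length + 1 - j : ℕ) : ℤ) = (u.length : ℤ) + 1 - j := by omega
  rw [hc] at this
  exact this

lemma eta_reverse (u w : List ℕ) : eta u w = eta u.reverse w.reverse := by
  unfold eta
  simp only [List.length_reverse]
  apply Finset.card_bij' (fun i _ => w.length + 2 - u.length - i)
    (fun i _ => w.length + 2 - u.length - i)
  · intro a ha
    simp only [Finset.mem_filter, Finset.mem_Icc] at ha ⊢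
    have he := embedsAt_reverse u w a ha.2
    refine ⟨⟨?_, ?_⟩, he⟩
    · omega
    · have := ha.2.1; have := ha.2.2.1; omega
  · intro a ha
    simp only [Finset.mem_filter, Finset.mem_Icc] at ha ⊢
    have he := embedsAt_reverse u.reverse w.reverse a ha.2
    simp only [List.reverse_reverse, List.length_reverse] at he
    refine ⟨⟨?_, ?_⟩, he⟩
    · omega
    · have := ha.2.1; have := ha.2.2.1
      simp only [List.length_reverse] at this ⊢
      omega
  · intro a ha
    simp only [Finset.mem_filter, Finset.mem_Icc] at ha
    have := ha.2.1; have := ha.2.2.1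
    omega
  · intro a ha
    simp only [Finset.mem_filter, Finset.mem_Icc] at ha
    have := ha.2.1
    have := ha.2.2.1
    simp only [List.length_reverse] at this
    omega

/-- Every word is strongly Wilf equivalent to its reversal. -/
theorem stronglyWilfEquiv_reverse (u : List ℕ) (hu : IsWord u) :
    StronglyWilfEquiv u u.reverse := by
  intro n m j
  have hset : {w : List ℕ | IsWord w ∧ w.length = n ∧ w.sum = m ∧ eta u.reverse w = j}
      = List.reverse '' {w : List ℕ | IsWord w ∧ w.length = n ∧ w.sum = m ∧ eta u w = j} := by
    ext w
    simp only [Set.mem_image, Set.mem_setOf_eq]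
    constructor
    · rintro ⟨hw, hl, hs, he⟩
      exact ⟨w.reverse, ⟨fun x hx => hw x (by simpa using hx), by simpa using hl,
        by rw [List.sum_reverse]; exact hs, by rw [eta_reverse, List.reverse_reverse]; exact he⟩,
        List.reverse_reverse w⟩
    · rintro ⟨v, ⟨hv, hl, hs, he⟩, rfl⟩
      exact ⟨fun x hx => hv x (by simpa using hx), by simpa, by rw [List.sum_reverse]; exact hs,
        by rw [← eta_reverse]; exact he⟩
  rw [hset, Set.ncard_image_of_injective _ List.reverse_injective]
end

section
/- If a word v is a rigid shift of a word u (at some height h ≥ 1 and integer shift k), then u and v are strongly Wilf equivalent: for all n, m, j ∈ ℕ, the number of words w with |w| = n, ‖w‖ = m, and η_u(w) = j equals the number of words w with |w| = n, ‖w‖ = m, and η_v(w) = j. -/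
open Finset

/-! ### letter lemmas -/

lemma letter_eq_zero_left (w : List ℕ) {q : ℤ} (hq : q < 1) : letter w q = 0 := by
  unfold letter
  rw [if_neg (by omega)]

lemma letter_eq_zero_right (w : List ℕ) {q : ℤ} (hq : (w.length : ℤ) < q) : letter w q = 0 := by
  unfold letter
  split
  · apply List.getD_eq_default
    omega
  · rfl

lemma letter_eq_getElem (w : List ℕ) {q : ℤ} (h1 : 1 ≤ q) (h2 : q ≤ (w.length : ℤ)) :
    letter w q = w[(q-1).toNat]'(by omega) := by
  unfold letter
  rw [if_pos h1]
  exact List.getD_eq_getElem w 0 (by omega)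

lemma letter_ofFn {N : ℕ} (f : Fin N → ℕ) {q : ℤ} (h1 : 1 ≤ q) (h2 : q ≤ (N : ℤ)) :
    letter (List.ofFn f) q = f ⟨(q-1).toNat, by omega⟩ := by
  rw [letter_eq_getElem (List.ofFn f) h1 (by simpa using h2)]
  simp [List.getElem_ofFn]

lemma letter_pos {w : List ℕ} (hw : IsWord w) {q : ℤ} (h1 : 1 ≤ q) (h2 : q ≤ (w.length : ℤ)) :
    1 ≤ letter w q := by
  rw [letter_eq_getElem w h1 h2]
  exact hw _ (List.getElem_mem _)

lemma sum_getD (w : List ℕ) : ∑ i ∈ Finset.range w.length, w.getD i 0 = w.sum := by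
  induction w with
  | nil => simp
  | cons a t ih =>
      rw [List.length_cons, Finset.sum_range_succ']
      simp only [List.getD_cons_succ, List.getD_cons_zero, List.sum_cons, ih]
      omega

lemma sum_letter (w : List ℕ) : ∑ q ∈ Finset.Icc (1:ℤ) (w.length:ℤ), letter w q = w.sum := by
  rw [← sum_getD w]
  refine Finset.sum_nbij' (fun q => (q-1).toNat) (fun i => (i:ℤ)+1) ?_ ?_ ?_ ?_ ?_
  · intro a ha; simp only [Finset.mem_Icc] at ha; simp only [Finset.mem_range]; omega
  · intro a ha; simp only [Finset.mem_range] at ha; simp only [Finset.mem_Icc]; omega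
  · intro a ha; simp only [Finset.mem_Icc] at ha; omega
  · intro a ha; simp only [Finset.mem_range] at ha; omega
  · intro a ha; simp only [Finset.mem_Icc] at ha
    unfold letter
    rw [if_pos (by omega)]

lemma list_ext_letter {w w' : List ℕ} (hl : w.length = w'.length)
    (h : ∀ q : ℤ, 1 ≤ q → q ≤ (w.length : ℤ) → letter w q = letter w' q) : w = w' := by
  apply List.ext_getElem hl
  intro i h1 h2
  have := h (i+1) (by omega) (by omega)
  rw [letter_eq_getElem w (by omega) (by omega), letter_eq_getElem w' (by omega) (by omega)] at this
  simpa using this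

/-! ### the excess-moving permutation -/

lemma exists_out (C : Finset ℤ) {k : ℤ} (hk : k ≠ 0) (q : ℤ) :
    ∃ t : ℕ, q + ((t:ℤ)+1)*k ∉ C := by
  by_contra hcon
  push_neg at hcon
  have hinj : Function.Injective (fun t : ℕ => q + ((t:ℤ)+1)*k) := by
    intro a b hab
    dsimp only at hab
    have : (a:ℤ) = (b:ℤ) := by
      have := mul_right_cancel₀ hk (by linarith : ((a:ℤ)+1)*k = ((b:ℤ)+1)*k)
      omega
    exact_mod_cast this
  have hr : Set.range (fun t : ℕ => q + ((t:ℤ)+1)*k) ⊆ (C : Set ℤ) := by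
    rintro x ⟨t, rfl⟩; exact hcon t
  exact (Set.infinite_range_of_injective hinj) (C.finite_toSet.subset hr)

open Classical in
noncomputable def tEnd (C : Finset ℤ) (k q : ℤ) : ℤ :=
  if H : ∃ t : ℕ, q + ((t:ℤ)+1)*k ∉ C then q + ((Nat.find H : ℤ)+1)*k else q

noncomputable def tau (C : Finset ℤ) (k q : ℤ) : ℤ :=
  if q - k ∈ C then q - k else if q ∈ C then tEnd C k q else q

lemma tau_of_mem_sub {C : Finset ℤ} {k q : ℤ} (h : q - k ∈ C) : tau C k q = q - k := by
  simp [tau, h]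

lemma tau_cases (C : Finset ℤ) (k q : ℤ) :
    tau C k q = q ∨ (q - k ∈ C ∧ tau C k q = q - k) ∨
      (q ∈ C ∧ tau C k q - k ∈ C ∧ tau C k q ∉ C) := by
  unfold tau
  by_cases h1 : q - k ∈ C
  · right; left; simp [h1]
  by_cases h2 : q ∈ C
  · rw [if_neg h1, if_pos h2]
    unfold tEnd
    split
    · next H =>
      right; right
      refine ⟨h2, ?_, Nat.find_spec H⟩
      rcases Nat.eq_zero_or_pos (Nat.find H) with h0 | h0
      · rw [h0]; push_cast; ring_nf; simpa using h2
      · have := Nat.find_min H (m := Nat.find H - 1) (by omega)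
        push_neg at this
        have heq : q + ((Nat.find H : ℤ)+1)*k - k = q + ((((Nat.find H - 1 : ℕ)):ℤ)+1)*k := by
          push_cast [h0]; ring
        rw [heq]; exact this
    · left; rfl
  · left; simp [h1, h2]

lemma tau_tau (C : Finset ℤ) (k q : ℤ) :
    tau (C.image (· + k)) (-k) (tau C k q) = q := by
  have memC' : ∀ x : ℤ, x ∈ C.image (· + k) ↔ x - k ∈ C := by
    intro x
    simp only [Finset.mem_image]
    constructor
    · rintro ⟨a, ha, rfl⟩; simpa using ha
    · intro hx; exact ⟨x - k, hx, by ring⟩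
  by_cases h1 : q - k ∈ C
  · rw [tau_of_mem_sub h1]
    unfold tau
    rw [if_pos (by rw [show q - k - -k = q by ring, memC']; exact h1)]
    ring
  by_cases h2 : q ∈ C
  · -- block case
    have hk : k ≠ 0 := by rintro rfl; simp at h1; exact h1 h2
    have H : ∃ t : ℕ, q + ((t:ℤ)+1)*k ∉ C := exists_out C hk q
    have htau : tau C k q = q + ((Nat.find H : ℤ)+1)*k := by
      unfold tau tEnd
      rw [if_neg h1, if_pos h2, dif_pos H]
    set T := Nat.find H with hT
    have hspec : q + ((T:ℤ)+1)*k ∉ C := Nat.find_spec H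
    have hmin : ∀ s : ℕ, s ≤ T → q + (s:ℤ)*k ∈ C := by
      intro s hs
      match s with
      | 0 => simpa using h2
      | s+1 =>
        have := Nat.find_min H (m := s) (by omega)
        push_neg at this
        have heq : q + (((s+1:ℕ)):ℤ)*k = q + ((s:ℤ)+1)*k := by push_cast; ring
        rw [heq]; exact this
    set e := q + ((T:ℤ)+1)*k with he
    rw [htau]
    unfold tau
    rw [if_neg (by rw [show e - -k = e + k by ring, memC']; simpa using hspec)]
    rw [if_pos (by rw [memC', show e - k = q + (T:ℤ)*k by rw [he]; ring]; exact hmin T le_rfl)]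
    unfold tEnd
    have H' : ∃ t : ℕ, e + ((t:ℤ)+1)*(-k) ∉ C.image (· + k) := by
      refine ⟨T, ?_⟩
      rw [memC']
      have : e + ((T:ℤ)+1)*(-k) - k = q - k := by rw [he]; ring
      rw [this]; exact h1
    rw [dif_pos H']
    have hfind : Nat.find H' = T := by
      rw [Nat.find_eq_iff]
      constructor
      · rw [memC']
        have : e + ((T:ℤ)+1)*(-k) - k = q - k := by rw [he]; ring
        rw [this]; exact h1
      · intro t ht
        simp only [not_not]
        rw [memC']
        have heq : e + ((t:ℤ)+1)*(-k) - k = q + (((T - t - 1 : ℕ)):ℤ)*k := by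
          rw [he]; push_cast [show (((T - t - 1 : ℕ)):ℤ) = (T:ℤ) - t - 1 by omega]; ring
        rw [heq]
        exact hmin _ (by omega)
    rw [hfind, he]; ring
  · unfold tau
    rw [if_neg h1, if_neg h2, if_neg, if_neg]
    · simp only [memC']; exact h1
    · simp only [show q - -k = q + k from by ring, memC', add_sub_cancel_right]; exact h2

lemma tau_mem_Icc {C : Finset ℤ} {k a b : ℤ}
    (hC : ∀ p ∈ C, a ≤ p ∧ p ≤ b) (hCk : ∀ p ∈ C, a ≤ p + k ∧ p + k ≤ b)
    {q : ℤ} (hq1 : a ≤ q) (hq2 : q ≤ b) : a ≤ tau C k q ∧ tau C k q ≤ b := by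
  rcases tau_cases C k q with h | ⟨hm, h⟩ | ⟨hm, hm2, _⟩
  · rw [h]; exact ⟨hq1, hq2⟩
  · rw [h]; exact hC _ hm
  · have := hCk _ hm2
    omega

/-! ### Cmask and phi -/

def Cmask (u : List ℕ) (h : ℕ) (S : Finset ℕ) : Finset ℤ :=
  S.biUnion fun i =>
    ((Finset.Icc 1 u.length).filter fun j : ℕ => h < letter u (j:ℤ)).image
      fun j : ℕ => (i:ℤ) + (j:ℤ) - 1

lemma mem_Cmask {u : List ℕ} {h : ℕ} {S : Finset ℕ} {p : ℤ} :
    p ∈ Cmask u h S ↔ ∃ i ∈ S, ∃ j : ℤ, 1 ≤ j ∧ j ≤ (u.length:ℤ) ∧ h < letter u j ∧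
      p = (i:ℤ) + j - 1 := by
  simp only [Cmask, Finset.mem_biUnion, Finset.mem_image, Finset.mem_filter, Finset.mem_Icc]
  constructor
  · rintro ⟨i, hi, j, ⟨⟨hj1, hj2⟩, hj3⟩, rfl⟩
    exact ⟨i, hi, (j:ℤ), by exact_mod_cast hj1, by exact_mod_cast hj2, hj3, rfl⟩
  · rintro ⟨i, hi, j, hj1, hj2, hj3, rfl⟩
    refine ⟨i, hi, j.toNat, ⟨⟨by omega, by omega⟩, ?_⟩, ?_⟩
    · rwa [show ((j.toNat:ℕ):ℤ) = j by omega]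
    · omega

noncomputable def phi (u : List ℕ) (h : ℕ) (k : ℤ) (S : Finset ℕ) (w : List ℕ) : List ℕ :=
  List.ofFn fun p : Fin w.length =>
    min h (letter w ((p:ℤ)+1)) + (letter w (tau (Cmask u h S) k ((p:ℤ)+1)) - h)

lemma phi_length (u : List ℕ) (h : ℕ) (k : ℤ) (S : Finset ℕ) (w : List ℕ) :
    (phi u h k S w).length = w.length := by simp [phi]

lemma letter_phi (u : List ℕ) (h : ℕ) (k : ℤ) (S : Finset ℕ) (w : List ℕ) {p : ℤ}
    (h1 : 1 ≤ p) (h2 : p ≤ (w.length:ℤ)) :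
    letter (phi u h k S w) p
      = min h (letter w p) + (letter w (tau (Cmask u h S) k p) - h) := by
  unfold phi
  rw [letter_ofFn _ h1 (by exact_mod_cast h2)]
  have : (((p-1).toNat : ℤ)) + 1 = p := by omega
  simp only [this]

lemma embeds_letter {u w : List ℕ} {i : ℕ} (he : EmbedsAt u w i) {j : ℤ}
    (h1 : 1 ≤ j) (h2 : j ≤ (u.length:ℤ)) : letter u j ≤ letter w ((i:ℤ) + j - 1) := by
  have := he.2.2 j.toNat (by simp only [Finset.mem_Icc]; omega)
  rwa [show ((j.toNat:ℕ):ℤ) = j by omega] at this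

/-! ### structural consequences of IsRigidShift -/

lemma rigid_high_iff {u v : List ℕ} {h : ℕ} {k : ℤ} (hsh : IsRigidShift u v h k) :
    ∀ j : ℤ, h < letter v j ↔ h < letter u (j - k) := by
  obtain ⟨h1, hlen, hP, hV⟩ := hsh
  intro j
  constructor
  · intro hj
    by_cases hb : 1 ≤ j ∧ j ≤ (v.length:ℤ)
    · rw [hV j hb.1 hb.2] at hj
      by_contra hc
      push_neg at hc
      have : letter u (j - k) - h = 0 := by omega
      omega
    · exfalso
      rcases (by omega : j < 1 ∨ (v.length:ℤ) < j) with hb' | hb'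
      · rw [letter_eq_zero_left v hb'] at hj; omega
      · rw [letter_eq_zero_right v hb'] at hj; omega
  · intro hj
    obtain ⟨hb1, hb2, hge⟩ := hP (j - k) hj
    rw [sub_add_cancel] at hb1 hb2 hge
    rw [hV j hb1 (by omega)]
    have : min h (letter u j) = h := by omega
    omega

lemma rigid_symm {u v : List ℕ} {h : ℕ} {k : ℤ} (hsh : IsRigidShift u v h k) :
    IsRigidShift v u h (-k) := by
  obtain ⟨h1, hlen, hP, hV⟩ := hsh
  have hsh' : IsRigidShift u v h k := ⟨h1, hlen, hP, hV⟩
  have hiff := rigid_high_iff hsh'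
  -- min part agreement
  have hmin : ∀ j : ℤ, min h (letter v j) = min h (letter u j) := by
    intro j
    by_cases hb : 1 ≤ j ∧ j ≤ (v.length:ℤ)
    · rw [hV j hb.1 hb.2]
      by_cases hc : h < letter u (j - k)
      · obtain ⟨_, _, hge⟩ := hP (j - k) hc
        rw [sub_add_cancel] at hge
        omega
      · push_neg at hc
        have : letter u (j - k) - h = 0 := by omega
        omega
    · rcases (by omega : j < 1 ∨ (v.length:ℤ) < j) with hb' | hb'
      · rw [letter_eq_zero_left v hb', letter_eq_zero_left u hb']
      · rw [letter_eq_zero_right v hb', letter_eq_zero_right u (by omega)]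
  -- excess part agreement
  have hexc : ∀ j : ℤ, letter v j - h = letter u (j - k) - h := by
    intro j
    by_cases hb : 1 ≤ j ∧ j ≤ (v.length:ℤ)
    · rw [hV j hb.1 hb.2]
      by_cases hc : h < letter u (j - k)
      · obtain ⟨_, _, hge⟩ := hP (j - k) hc
        rw [sub_add_cancel] at hge
        omega
      · omega
    · rcases (by omega : j < 1 ∨ (v.length:ℤ) < j) with hb' | hb'
      · rw [letter_eq_zero_left v hb']
        by_cases hc : h < letter u (j - k)
        · exfalso; obtain ⟨hb1, _, _⟩ := hP (j - k) hc; omega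
        · omega
      · rw [letter_eq_zero_right v hb']
        by_cases hc : h < letter u (j - k)
        · exfalso; obtain ⟨_, hb2, _⟩ := hP (j - k) hc
          rw [sub_add_cancel] at hb2; omega
        · omega
  refine ⟨h1, hlen.symm, ?_, ?_⟩
  · intro j hj
    rw [hiff j] at hj
    have hb : 1 ≤ j - k ∧ j - k ≤ (u.length:ℤ) := by
      constructor
      · by_contra hc; rw [letter_eq_zero_left u (by omega)] at hj; omega
      · by_contra hc; rw [letter_eq_zero_right u (by omega)] at hj; omega
    refine ⟨by omega, by omega, ?_⟩
    rw [show j + -k = j - k by ring]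
    have := hmin (j - k)
    have : min h (letter u (j-k)) = h := by omega
    omega
  · intro j hj1 hj2
    rw [show j - -k = j + k by ring]
    have h5 := hmin j
    have h6 := hexc (j + k)
    rw [show j + k - k = j by ring] at h6
    have h7 : letter u j = min h (letter u j) + (letter u j - h) := by omega
    omega

lemma Cmask_shift {u v : List ℕ} {h : ℕ} {k : ℤ} (hsh : IsRigidShift u v h k)
    (S : Finset ℕ) : Cmask v h S = (Cmask u h S).image (· + k) := by
  have hiff := rigid_high_iff hsh
  ext p
  simp only [Finset.mem_image]
  constructor
  · intro hp
    rw [mem_Cmask] at hp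
    obtain ⟨i, hi, j, hj1, hj2, hj3, rfl⟩ := hp
    refine ⟨(i:ℤ) + (j - k) - 1, ?_, by ring⟩
    rw [mem_Cmask]
    have hu : h < letter u (j - k) := (hiff j).mp hj3
    have hb : 1 ≤ j - k ∧ j - k ≤ (u.length:ℤ) := by
      constructor
      · by_contra hc; rw [letter_eq_zero_left u (by omega)] at hu; omega
      · by_contra hc; rw [letter_eq_zero_right u (by omega)] at hu; omega
    exact ⟨i, hi, j - k, hb.1, hb.2, hu, rfl⟩
  · rintro ⟨x, hx, rfl⟩
    rw [mem_Cmask] at hx ⊢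
    obtain ⟨i, hi, j, hj1, hj2, hj3, rfl⟩ := hx
    obtain ⟨hb1, hb2, _⟩ := hsh.2.2.1 j hj3
    refine ⟨i, hi, j + k, hb1, by rw [hsh.2.1]; exact hb2, ?_, by ring⟩
    rw [hiff (j + k), show j + k - k = j by ring]
    exact hj3

lemma Cmask_facts {u v w : List ℕ} {h : ℕ} {k : ℤ} {S : Finset ℕ}
    (hsh : IsRigidShift u v h k) (hS : ∀ i ∈ S, EmbedsAt u w i) {p : ℤ}
    (hp : p ∈ Cmask u h S) :
    1 ≤ p ∧ p ≤ (w.length:ℤ) ∧ h < letter w p ∧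
      1 ≤ p + k ∧ p + k ≤ (w.length:ℤ) ∧ h ≤ letter w (p + k) := by
  rw [mem_Cmask] at hp
  obtain ⟨i, hi, j, hj1, hj2, hj3, rfl⟩ := hp
  have he := hS i hi
  have hi1 : 1 ≤ i := he.1
  have hi2 : (i:ℤ) + (u.length:ℤ) ≤ (w.length:ℤ) + 1 := by exact_mod_cast he.2.1
  obtain ⟨hb1, hb2, hge⟩ := hsh.2.2.1 j hj3
  have h1 : h < letter w ((i:ℤ) + j - 1) :=
    lt_of_lt_of_le hj3 (embeds_letter he hj1 hj2)
  have h2 : h ≤ letter w ((i:ℤ) + j - 1 + k) := by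
    have := embeds_letter he hb1 hb2
    rw [show (i:ℤ) + (j + k) - 1 = (i:ℤ) + j - 1 + k by ring] at this
    exact le_trans hge this
  refine ⟨by omega, by omega, h1, by omega, by omega, h2⟩

lemma min_add_sub' (h a : ℕ) : min h a + (a - h) = a := by
  rcases Nat.le_total h a with hc | hc
  · rw [min_eq_left hc]; omega
  · rw [min_eq_right hc]; omega

lemma image_add_neg (C : Finset ℤ) (k : ℤ) : (C.image (· + k)).image (· + (-k)) = C := by
  ext x
  simp only [Finset.mem_image]
  constructor
  · rintro ⟨y, ⟨z, hz, rfl⟩, rfl⟩; simpa using hz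
  · intro hx; exact ⟨x + k, ⟨x, hx, rfl⟩, by ring⟩

section Master

variable {u v w : List ℕ} {h : ℕ} {k : ℤ} {S : Finset ℕ}

lemma phi_isWord (hw : IsWord w) (hh : 1 ≤ h) : IsWord (phi u h k S w) := by
  intro x hx
  rw [phi, List.mem_ofFn] at hx
  obtain ⟨p, rfl⟩ := hx
  have h1 : 1 ≤ letter w ((p:ℤ)+1) := letter_pos hw (by omega) (by have := p.2; omega)
  have h2 : 1 ≤ min h (letter w ((p:ℤ)+1)) := le_min hh h1
  exact Nat.lt_of_lt_of_le Nat.zero_lt_one (le_trans h2 (Nat.le_add_right _ _))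

lemma phi_sum (hsh : IsRigidShift u v h k) (hS : ∀ i ∈ S, EmbedsAt u w i) :
    (phi u h k S w).sum = w.sum := by
  have hfacts := fun {p} (hp : p ∈ Cmask u h S) => Cmask_facts hsh hS hp
  set C := Cmask u h S with hC
  set C' := C.image (· + k) with hC'
  have hCb : ∀ p ∈ C, 1 ≤ p ∧ p ≤ (w.length:ℤ) := fun p hp => ⟨(hfacts hp).1, (hfacts hp).2.1⟩
  have hCkb : ∀ p ∈ C, 1 ≤ p + k ∧ p + k ≤ (w.length:ℤ) := fun p hp =>
    ⟨(hfacts hp).2.2.2.1, (hfacts hp).2.2.2.2.1⟩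
  have hC'b : ∀ p ∈ C', 1 ≤ p ∧ p ≤ (w.length:ℤ) := by
    rintro p hp
    rw [hC', Finset.mem_image] at hp
    obtain ⟨c, hc, rfl⟩ := hp
    exact hCkb c hc
  have hC'kb : ∀ p ∈ C', 1 ≤ p + -k ∧ p + -k ≤ (w.length:ℤ) := by
    rintro p hp
    rw [hC', Finset.mem_image] at hp
    obtain ⟨c, hc, rfl⟩ := hp
    rw [show c + k + -k = c by ring]
    exact hCb c hc
  rw [← sum_letter (phi u h k S w), ← sum_letter w, phi_length]
  have h1 : ∑ q ∈ Finset.Icc (1:ℤ) (w.length:ℤ), letter (phi u h k S w) q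
      = ∑ q ∈ Finset.Icc (1:ℤ) (w.length:ℤ),
          (min h (letter w q) + (letter w (tau C k q) - h)) :=
    Finset.sum_congr rfl (fun q hq => by
      rw [Finset.mem_Icc] at hq
      exact letter_phi u h k S w hq.1 hq.2)
  rw [h1, Finset.sum_add_distrib]
  have hmove : ∑ q ∈ Finset.Icc (1:ℤ) (w.length:ℤ), (letter w (tau C k q) - h)
      = ∑ q ∈ Finset.Icc (1:ℤ) (w.length:ℤ), (letter w q - h) := by
    refine Finset.sum_nbij' (fun q => tau C k q) (fun q => tau C' (-k) q) ?_ ?_ ?_ ?_ ?_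
    · intro a ha
      rw [Finset.mem_Icc] at ha ⊢
      exact tau_mem_Icc hCb hCkb ha.1 ha.2
    · intro a ha
      rw [Finset.mem_Icc] at ha ⊢
      exact tau_mem_Icc hC'b hC'kb ha.1 ha.2
    · intro a _; exact tau_tau C k a
    · intro a _
      have := tau_tau C' (-k) a
      rwa [hC', image_add_neg, neg_neg] at this
    · intro a _; rfl
  rw [hmove, ← Finset.sum_add_distrib]
  exact Finset.sum_congr rfl fun q hq => min_add_sub' h (letter w q)

lemma phi_embeds (hsh : IsRigidShift u v h k) (hS : ∀ i ∈ S, EmbedsAt u w i) :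
    ∀ i ∈ S, EmbedsAt v (phi u h k S w) i := by
  intro i hi
  have he := hS i hi
  have hlen : v.length = u.length := hsh.2.1
  refine ⟨he.1, by rw [phi_length, hlen]; exact he.2.1, ?_⟩
  intro j hj
  rw [Finset.mem_Icc] at hj
  set p := (i:ℤ) + (j:ℤ) - 1 with hp
  have hi1 : 1 ≤ i := he.1
  have hi2 : (i:ℤ) + (u.length:ℤ) ≤ (w.length:ℤ) + 1 := by exact_mod_cast he.2.1
  have hp1 : 1 ≤ p := by omega
  have hp2 : p ≤ (w.length:ℤ) := by omega
  rw [letter_phi u h k S w hp1 hp2]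
  rw [hsh.2.2.2 (j:ℤ) (by exact_mod_cast hj.1) (by exact_mod_cast hj.2)]
  have piece1 : letter u (j:ℤ) ≤ letter w p :=
    embeds_letter he (by exact_mod_cast hj.1) (by rw [← hlen]; exact_mod_cast hj.2)
  by_cases hc : h < letter u ((j:ℤ) - k)
  · have hb : 1 ≤ (j:ℤ) - k ∧ (j:ℤ) - k ≤ (u.length:ℤ) := by
      constructor
      · by_contra hcc; rw [letter_eq_zero_left u (by omega)] at hc; omega
      · by_contra hcc; rw [letter_eq_zero_right u (by omega)] at hc; omega
    have hmem : p - k ∈ Cmask u h S := by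
      rw [mem_Cmask]
      exact ⟨i, hi, (j:ℤ) - k, hb.1, hb.2, hc, by rw [hp]; ring⟩
    rw [tau_of_mem_sub hmem]
    have piece2 : letter u ((j:ℤ) - k) ≤ letter w (p - k) := by
      have := embeds_letter he hb.1 hb.2
      rwa [show (i:ℤ) + ((j:ℤ) - k) - 1 = p - k by rw [hp]; ring] at this
    exact Nat.add_le_add (min_le_min_left h piece1) (Nat.sub_le_sub_right piece2 h)
  · push_neg at hc
    have h0 : letter u ((j:ℤ) - k) - h = 0 := Nat.sub_eq_zero_of_le hc
    rw [h0, Nat.add_zero]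
    exact le_trans (min_le_min_left h piece1) (Nat.le_add_right _ _)

lemma phi_phi (hsh : IsRigidShift u v h k) (hS : ∀ i ∈ S, EmbedsAt u w i) :
    phi v h (-k) S (phi u h k S w) = w := by
  have hfacts := fun {p} (hp : p ∈ Cmask u h S) => Cmask_facts hsh hS hp
  set C := Cmask u h S with hC
  have hCmask' : Cmask v h S = C.image (· + k) := Cmask_shift hsh S
  set w' := phi u h k S w with hw'
  have hwl : w'.length = w.length := phi_length u h k S w
  apply list_ext_letter (by rw [phi_length, hwl])
  intro p hp1 hp2
  rw [phi_length, hwl] at hp2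
  have hC'b : ∀ q ∈ Cmask v h S, 1 ≤ q ∧ q ≤ (w.length:ℤ) := by
    intro q hq
    rw [hCmask', Finset.mem_image] at hq
    obtain ⟨c, hc, rfl⟩ := hq
    exact ⟨(hfacts hc).2.2.2.1, (hfacts hc).2.2.2.2.1⟩
  have hC'kb : ∀ q ∈ Cmask v h S, 1 ≤ q + -k ∧ q + -k ≤ (w.length:ℤ) := by
    intro q hq
    rw [hCmask', Finset.mem_image] at hq
    obtain ⟨c, hc, rfl⟩ := hq
    rw [show c + k + -k = c by ring]
    exact ⟨(hfacts hc).1, (hfacts hc).2.1⟩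
  rw [letter_phi v h (-k) S w' hp1 (by rw [hwl]; exact hp2)]
  -- letters of w' at p and at q
  have hlp : letter w' p = min h (letter w p) + (letter w (tau C k p) - h) :=
    letter_phi u h k S w hp1 hp2
  set q := tau (Cmask v h S) (-k) p with hq
  have hqmem : 1 ≤ q ∧ q ≤ (w.length:ℤ) := tau_mem_Icc hC'b hC'kb hp1 hp2
  have htauq : tau C k q = p := by
    have := tau_tau (Cmask v h S) (-k) p
    rwa [hCmask', image_add_neg, neg_neg, ← hCmask'] at this
  have hlq : letter w' q = min h (letter w q) + (letter w p - h) := by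
    rw [letter_phi u h k S w hqmem.1 hqmem.2, ← hC, htauq]
  -- step (i)
  have stepi : min h (letter w' p) = min h (letter w p) := by
    have hor : letter w (tau C k p) - h = 0 ∨ h ≤ letter w p := by
      by_cases hl : letter w (tau C k p) ≤ h
      · left; omega
      · right
        rcases tau_cases C k p with hcase | ⟨hm, hcase⟩ | ⟨hm, _, _⟩
        · rw [hcase] at hl; omega
        · have := (hfacts hm).2.2.2.2.2
          rw [sub_add_cancel] at this
          exact this
        · exact le_of_lt (hfacts hm).2.2.1
    rcases hor with h0 | h0
    · rw [hlp, h0, Nat.add_zero, min_eq_right (min_le_left h (letter w p))]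
    · rw [hlp, min_eq_left h0, min_eq_left (Nat.le_add_right h _)]
  -- step (ii)
  have stepii : letter w' q - h = letter w p - h := by
    have hor : letter w p ≤ h ∨ h ≤ letter w q := by
      by_cases hl : letter w p ≤ h
      · left; exact hl
      · right
        rcases tau_cases C k q with hcase | ⟨hm, hcase⟩ | ⟨hm, _, _⟩
        · rw [htauq] at hcase
          rw [← hcase]; omega
        · rw [htauq] at hcase
          have hm' : p ∈ C := by rw [hcase]; exact hm
          have h2 := (hfacts hm').2.2.2.2.2
          have hqe : p + k = q := by omega
          rwa [hqe] at h2
        · exact le_of_lt (hfacts hm).2.2.1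
    rw [hlq]
    rcases hor with h0 | h0
    · have e0 : letter w p - h = 0 := Nat.sub_eq_zero_of_le h0
      rw [e0, Nat.add_zero]
      exact Nat.sub_eq_zero_of_le (min_le_left _ _)
    · rw [min_eq_left h0]
      omega
  rw [stepi, stepii]
  exact min_add_sub' h (letter w p)

end Master

/-! ### counting -/

lemma words_finite (n m : ℕ) :
    {w : List ℕ | IsWord w ∧ w.length = n ∧ w.sum = m}.Finite := by
  classical
  set g : List ℕ → List (Fin (m+1)) :=
    List.map (fun x => (⟨x % (m+1), Nat.mod_lt _ (Nat.succ_pos m)⟩ : Fin (m+1))) with hg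
  have hrec : ∀ w ∈ {w : List ℕ | IsWord w ∧ w.length = n ∧ w.sum = m},
      (g w).map Fin.val = w := by
    intro w hw
    obtain ⟨h1, h2, h3⟩ := hw
    rw [hg, List.map_map]
    have hcong : ∀ x ∈ w,
        (Fin.val ∘ fun x => (⟨x % (m+1), Nat.mod_lt _ (Nat.succ_pos m)⟩ : Fin (m+1))) x = x := by
      intro x hx
      have hxle : x ≤ w.sum := List.single_le_sum (fun y _ => Nat.zero_le y) x hx
      simp only [Function.comp_apply]
      exact Nat.mod_eq_of_lt (by omega)
    rw [List.map_congr_left hcong]; exact List.map_id w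
  apply Set.Finite.of_finite_image (f := g) ?_ ?_
  · apply (List.finite_length_eq (Fin (m+1)) n).subset
    rintro _ ⟨w, hw, rfl⟩
    simp only [Set.mem_setOf_eq, hg, List.length_map]
    exact hw.2.1
  · intro a ha b hb hab
    rw [← hrec a ha, ← hrec b hb, hab]

def occ (u w : List ℕ) : Finset ℕ :=
  (Finset.Icc 1 (w.length + 1 - u.length)).filter (EmbedsAt u w)

lemma eta_occ (u w : List ℕ) : eta u w = (occ u w).card := rfl

lemma mem_occ {u w : List ℕ} {i : ℕ} : i ∈ occ u w ↔ EmbedsAt u w i := by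
  rw [occ, Finset.mem_filter, Finset.mem_Icc]
  constructor
  · exact fun hh => hh.2
  · intro hh; exact ⟨⟨hh.1, by have := hh.2.1; omega⟩, hh⟩

lemma eta_le (u w : List ℕ) : eta u w ≤ w.length + 1 := by
  have := Finset.card_filter_le (Finset.Icc 1 (w.length + 1 - u.length)) (EmbedsAt u w)
  rw [Nat.card_Icc] at this
  unfold eta
  omega

lemma sum_choose_eq (u v : List ℕ) (h : ℕ) (k : ℤ) (hsh : IsRigidShift u v h k)
    (n m : ℕ) (W : Finset (List ℕ))
    (hWmem : ∀ w, w ∈ W ↔ IsWord w ∧ w.length = n ∧ w.sum = m) (r : ℕ) :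
    ∑ w ∈ W, (eta u w).choose r = ∑ w ∈ W, (eta v w).choose r := by
  classical
  have hcard : ∀ c : List ℕ, ∑ w ∈ W, (eta c w).choose r
      = (W.sigma (fun w => (occ c w).powersetCard r)).card := by
    intro c
    rw [Finset.card_sigma]
    exact Finset.sum_congr rfl fun w _ => by rw [Finset.card_powersetCard, eta_occ]
  rw [hcard u, hcard v]
  have hmem : ∀ (c₁ c₂ : List ℕ) (k' : ℤ), IsRigidShift c₁ c₂ h k' →
      ∀ a : (_ : List ℕ) × Finset ℕ, a ∈ W.sigma (fun w => (occ c₁ w).powersetCard r) →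
      (⟨phi c₁ h k' a.2 a.1, a.2⟩ : (_ : List ℕ) × Finset ℕ)
        ∈ W.sigma (fun w => (occ c₂ w).powersetCard r) := by
    intro c₁ c₂ k' hsh' a ha
    rw [Finset.mem_sigma, Finset.mem_powersetCard] at ha ⊢
    obtain ⟨haW, hsub, hcardS⟩ := ha
    obtain ⟨hword, hlen, hsum⟩ := (hWmem a.1).mp haW
    have hS : ∀ i ∈ a.2, EmbedsAt c₁ a.1 i := fun i hi => mem_occ.mp (hsub hi)
    refine ⟨(hWmem _).mpr ⟨phi_isWord hword hsh'.1, ?_, ?_⟩, ?_, hcardS⟩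
    · rw [phi_length]; exact hlen
    · rw [phi_sum hsh' hS]; exact hsum
    · intro i hi
      exact mem_occ.mpr (phi_embeds hsh' hS i hi)
  refine Finset.card_bij' (fun a _ => ⟨phi u h k a.2 a.1, a.2⟩)
    (fun a _ => ⟨phi v h (-k) a.2 a.1, a.2⟩)
    (hmem u v k hsh) (hmem v u (-k) (rigid_symm hsh)) ?_ ?_
  · intro a ha
    rw [Finset.mem_sigma, Finset.mem_powersetCard] at ha
    have hS : ∀ i ∈ a.2, EmbedsAt u a.1 i := fun i hi => mem_occ.mp (ha.2.1 hi)
    show (⟨phi v h (-k) a.2 (phi u h k a.2 a.1), a.2⟩ : (_ : List ℕ) × Finset ℕ) = a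
    rw [phi_phi hsh hS]
  · intro a ha
    rw [Finset.mem_sigma, Finset.mem_powersetCard] at ha
    have hS : ∀ i ∈ a.2, EmbedsAt v a.1 i := fun i hi => mem_occ.mp (ha.2.1 hi)
    show (⟨phi u h k a.2 (phi v h (-k) a.2 a.1), a.2⟩ : (_ : List ℕ) × Finset ℕ) = a
    have := phi_phi (rigid_symm hsh) hS
    rw [neg_neg] at this
    rw [this]

lemma group_count (W : Finset (List ℕ)) (f : List ℕ → ℕ) (B : ℕ)
    (hf : ∀ w ∈ W, f w < B) (r : ℕ) :
    ∑ w ∈ W, (f w).choose r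
      = ∑ j ∈ Finset.range B, ((W.filter (fun w => f w = j)).card) * j.choose r := by
  classical
  rw [← Finset.sum_fiberwise_of_maps_to (fun w hw => Finset.mem_range.mpr (hf w hw))
        (fun w => (f w).choose r)]
  refine Finset.sum_congr rfl fun j _ => ?_
  calc ∑ w ∈ W.filter (fun w => f w = j), (f w).choose r
      = ∑ _w ∈ W.filter (fun w => f w = j), j.choose r :=
        Finset.sum_congr rfl (fun w hw => by rw [(Finset.mem_filter.mp hw).2])
    _ = _ := by rw [Finset.sum_const, smul_eq_mul]

lemma binom_step {B : ℕ} (a b : ℕ → ℕ)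
    (hsum : ∀ r, ∑ j ∈ Finset.range B, a j * j.choose r
      = ∑ j ∈ Finset.range B, b j * j.choose r)
    {j : ℕ} (hj : j < B) (ih : ∀ j', j < j' → j' < B → a j' = b j') : a j = b j := by
  have key : ∀ c : ℕ → ℕ, ∑ j' ∈ Finset.range B, c j' * j'.choose j
      = c j * 1 + ∑ j' ∈ Finset.Ico (j+1) B, c j' * j'.choose j := by
    intro c
    rw [Finset.range_eq_Ico, ← Finset.sum_Ico_consecutive _ (Nat.zero_le (j+1)) (by omega : j+1 ≤ B)]
    congr 1
    rw [← Finset.range_eq_Ico, Finset.sum_eq_single_of_mem j (Finset.self_mem_range_succ j)]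
    · rw [Nat.choose_self]
    · intro x hx hne
      rw [Finset.mem_range] at hx
      rw [Nat.choose_eq_zero_of_lt (by omega), Nat.mul_zero]
  have h1 := hsum j
  rw [key a, key b] at h1
  have h2 : ∑ j' ∈ Finset.Ico (j+1) B, a j' * j'.choose j
      = ∑ j' ∈ Finset.Ico (j+1) B, b j' * j'.choose j :=
    Finset.sum_congr rfl fun x hx => by
      rw [Finset.mem_Ico] at hx
      rw [ih x hx.1 hx.2]
  omega

lemma binom_inv {B : ℕ} (a b : ℕ → ℕ)
    (hsum : ∀ r, ∑ j ∈ Finset.range B, a j * j.choose r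
      = ∑ j ∈ Finset.range B, b j * j.choose r) :
    ∀ j, j < B → a j = b j := by
  have main : ∀ d j, B - j ≤ d → j < B → a j = b j := by
    intro d
    induction d with
    | zero => intro j hd hj; omega
    | succ d ihd =>
      intro j hd hj
      exact binom_step a b hsum hj (fun j' h1 h2 => ihd j' (by omega) h2)
  exact fun j hj => main B j (by omega) hj

/-- A rigid shift of a word is strongly Wilf equivalent to it. -/
theorem rigidShift_stronglyWilfEquiv (u v : List ℕ) (h : ℕ) (k : ℤ)
    (hu : IsWord u) (hv : IsWord v) (hshift : IsRigidShift u v h k) :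
    StronglyWilfEquiv u v := by
  intro n m j
  classical
  have hfin := words_finite n m
  have hset : ∀ c : List ℕ,
      {w : List ℕ | IsWord w ∧ w.length = n ∧ w.sum = m ∧ eta c w = j}
        = ↑(hfin.toFinset.filter (fun w => eta c w = j)) := by
    intro c
    ext w
    simp only [Set.mem_setOf_eq, Finset.coe_filter, Set.Finite.mem_toFinset]
    tauto
  rw [hset u, hset v, Set.ncard_coe_finset, Set.ncard_coe_finset]
  set W := hfin.toFinset with hWdef
  have hWmem : ∀ w, w ∈ W ↔ IsWord w ∧ w.length = n ∧ w.sum = m :=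
    fun w => hfin.mem_toFinset
  have hbound : ∀ c : List ℕ, ∀ w ∈ W, eta c w < n + 2 := by
    intro c w hw
    have h1 := eta_le c w
    have h2 := (hWmem w).mp hw
    omega
  by_cases hj : j < n + 2
  · refine binom_inv (fun j' => (W.filter (fun w => eta u w = j')).card)
      (fun j' => (W.filter (fun w => eta v w = j')).card) ?_ j hj
    intro r
    rw [← group_count W (eta u) (n+2) (hbound u) r,
        ← group_count W (eta v) (n+2) (hbound v) r]
    exact sum_choose_eq u v h k hshift n m W hWmem r
  · have hempty : ∀ c : List ℕ, W.filter (fun w => eta c w = j) = ∅ := by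
      intro c
      apply Finset.filter_eq_empty_iff.mpr
      intro w hw
      have := hbound c w hw
      omega
    rw [hempty u, hempty v]
end

section
/- Let u = u_1⋯u_L be a word of length L ≥ 1, let m ≥ 1, and let 1 = i_1 < i_2 < ⋯ < i_m be positions with i_{j+1} ≤ i_j + L − 1 for all 1 ≤ j < m. Let c be the word of length N = i_m + L − 1 defined by c_n = max_{1≤j≤m} u_{n−i_j+1} (with u_t = 0 for t ∉ {1,…,L}). Suppose v is the rigid shift of u at height h ≥ 1 by the integer k, and let d be the word of length N defined by d_n = max_{1≤j≤m} v_{n−i_j+1} (with v_t = 0 for t ∉ {1,…,L}). Then d has the same letter sum as c: ‖d‖ = ‖c‖. -/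
lemma letter_support {u : List ℕ} {n : ℤ} (h : letter u n ≠ 0) :
    1 ≤ n ∧ n ≤ (u.length : ℤ) := by
  unfold letter at h
  split at h
  · refine ⟨by assumption, ?_⟩
    by_contra hgt
    push_neg at hgt
    rw [List.getD_eq_default] at h
    · exact h rfl
    · omega
  · exact absurd rfl h

lemma letter_zero {u : List ℕ} {n : ℤ} (h : ¬ (1 ≤ n ∧ n ≤ (u.length : ℤ))) :
    letter u n = 0 := by
  by_contra hc
  exact h (letter_support hc)

lemma sup_add_trunc {m h : ℕ} (hm : 1 ≤ m) (a b : ℕ → ℕ)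
    (hab : ∀ j ∈ Finset.Icc 1 m, h < b j → h ≤ a j) :
    (Finset.Icc 1 m).sup (fun j => min h (a j) + (b j - h))
      = min h ((Finset.Icc 1 m).sup a) + ((Finset.Icc 1 m).sup b - h) := by
  have hne : (Finset.Icc 1 m).Nonempty := ⟨1, by simp [Finset.mem_Icc]; omega⟩
  apply le_antisymm
  · apply Finset.sup_le
    intro j hj
    have h1 : a j ≤ (Finset.Icc 1 m).sup a := Finset.le_sup hj
    have h2 : b j ≤ (Finset.Icc 1 m).sup b := Finset.le_sup hj
    omega
  · obtain ⟨ja, hja, hsa⟩ := Finset.exists_mem_eq_sup _ hne a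
    obtain ⟨jb, hjb, hsb⟩ := Finset.exists_mem_eq_sup _ hne b
    by_cases hb : b jb ≤ h
    · have : min h (a ja) + (b ja - h) ≤ _ := Finset.le_sup (f := fun j => min h (a j) + (b j - h)) hja
      omega
    · push_neg at hb
      have hha : h ≤ a jb := hab jb hjb hb
      have : min h (a jb) + (b jb - h) ≤ _ := Finset.le_sup (f := fun j => min h (a j) + (b j - h)) hjb
      have hmm : min h (a jb) = h := by omega
      have hminle : min h ((Finset.Icc 1 m).sup a) ≤ h := min_le_left _ _
      omega

lemma sum_shift {N : ℤ} (f : ℤ → ℕ) (k : ℤ)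
    (hsupp : ∀ t : ℤ, f t ≠ 0 → 1 ≤ t ∧ t ≤ N ∧ 1 ≤ t + k ∧ t + k ≤ N) :
    ∑ n ∈ Finset.Icc (1:ℤ) N, f (n - k) = ∑ n ∈ Finset.Icc (1:ℤ) N, f n := by
  have h1 : ∑ n ∈ Finset.Icc (1:ℤ) N, f (n - k)
      = ∑ t ∈ Finset.Icc (1-k) (N-k), f t := by
    apply Finset.sum_nbij' (i := fun n => n - k) (j := fun t => t + k) <;>
      simp [Finset.mem_Icc] <;> omega
  rw [h1]
  have hsub1 : Finset.Icc (1-k) (N-k) ⊆ Finset.Icc (min 1 (1-k)) (max N (N-k)) := by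
    apply Finset.Icc_subset_Icc <;> omega
  have hsub2 : Finset.Icc (1:ℤ) N ⊆ Finset.Icc (min 1 (1-k)) (max N (N-k)) := by
    apply Finset.Icc_subset_Icc <;> omega
  rw [Finset.sum_subset hsub1, Finset.sum_subset hsub2]
  · intro x _ hx
    simp [Finset.mem_Icc] at hx
    by_contra hc
    have := hsupp x hc
    omega
  · intro x _ hx
    simp [Finset.mem_Icc] at hx
    by_contra hc
    have := hsupp x hc
    omega

lemma list_range_map_sum (N : ℕ) (f : ℕ → ℕ) :
    ((List.range N).map f).sum = ∑ t ∈ Finset.range N, f t := by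
  induction N with
  | zero => simp
  | succ n ih =>
      rw [List.range_succ, List.map_append, List.sum_append, Finset.sum_range_succ, ih]
      simp

lemma range_sum_to_Icc (N : ℕ) (g : ℤ → ℕ) :
    ∑ t ∈ Finset.range N, g ((t:ℤ)+1) = ∑ n ∈ Finset.Icc (1:ℤ) N, g n := by
  apply Finset.sum_nbij' (i := fun t : ℕ => (t:ℤ)+1) (j := fun n : ℤ => (n-1).toNat) <;>
    simp [Finset.mem_Icc, Finset.mem_range] <;> omega

/-- If `v` is the rigid shift of `u` at height `h ≥ 1` by `k`,
then the minimal clusters `c` of `u` and `d` of `v` with the same marked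
occurrence positions have the same letter sum. -/
theorem minimal_cluster_sum_eq (u v : List ℕ) (hu : IsWord u) (hv : IsWord v)
    (hL : 1 ≤ u.length) (h : ℕ) (k : ℤ) (hshift : IsRigidShift u v h k)
    (m : ℕ) (hm : 1 ≤ m) (i : ℕ → ℕ) (hi1 : i 1 = 1)
    (hmono : ∀ j, 1 ≤ j → j < m → i j < i (j + 1))
    (hoverlap : ∀ j, 1 ≤ j → j < m → i (j + 1) ≤ i j + u.length - 1) :
    ∀ N : ℕ, N = i m + u.length - 1 →
    ∀ c d : List ℕ,
      c = (List.range N).map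
        (fun t => (Finset.Icc 1 m).sup
          (fun j => letter u (((t : ℤ) + 1) - (i j : ℤ) + 1))) →
      d = (List.range N).map
        (fun t => (Finset.Icc 1 m).sup
          (fun j => letter v (((t : ℤ) + 1) - (i j : ℤ) + 1))) →
    d.sum = c.sum := by
  intro N hN c d hc hd
  obtain ⟨hh1, hlen, hrig, hval⟩ := hshift
  have hlenZ : (v.length : ℤ) = (u.length : ℤ) := by omega
  -- monotonicity of i
  have himono : ∀ b, b ≤ m → ∀ a, 1 ≤ a → a ≤ b → i a ≤ i b := by
    intro b
    induction b with
    | zero => intro _ a h1 h2; omega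
    | succ n ih =>
        intro hbm a h1 h2
        rcases Nat.lt_or_ge a (n + 1) with hlt | hge
        · have h3 : i a ≤ i n := ih (by omega) a h1 (by omega)
          have h4 : i n < i (n + 1) := hmono n (by omega) (by omega)
          omega
        · have : a = n + 1 := by omega
          subst this; exact le_rfl
  have hibounds : ∀ j ∈ Finset.Icc 1 m, 1 ≤ i j ∧ i j ≤ i m := by
    intro j hj
    simp [Finset.mem_Icc] at hj
    constructor
    · have := himono j hj.2 1 le_rfl hj.1
      omega
    · exact himono m le_rfl j hj.1 hj.2
  have him1 : 1 ≤ i m := (hibounds m (by simp [Finset.mem_Icc]; omega)).1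
  have hNZ : (N : ℤ) = (i m : ℤ) + (u.length : ℤ) - 1 := by omega
  -- the cluster functions on ℤ
  set CC : ℤ → ℕ := fun t => (Finset.Icc 1 m).sup (fun j => letter u (t - (i j : ℤ) + 1)) with hCC
  set DD : ℤ → ℕ := fun t => (Finset.Icc 1 m).sup (fun j => letter v (t - (i j : ℤ) + 1)) with hDD
  -- step 1: pointwise description of letters of v, for all n
  have hV : ∀ n : ℤ, letter v n = min h (letter u n) + (letter u (n - k) - h) := by
    intro n
    by_cases h1 : 1 ≤ n ∧ n ≤ (v.length : ℤ)
    · exact hval n h1.1 h1.2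
    · have hvz : letter v n = 0 := letter_zero h1
      have huz : letter u n = 0 := letter_zero (by omega)
      have hule : letter u (n - k) ≤ h := by
        by_contra hcon
        push_neg at hcon
        obtain ⟨ha, hb, _⟩ := hrig (n - k) hcon
        omega
      rw [hvz, huz]
      omega
  -- step 2: DD is the rigid shift of CC
  have hDC : ∀ n : ℤ, DD n = min h (CC n) + (CC (n - k) - h) := by
    intro n
    have e1 : DD n = (Finset.Icc 1 m).sup
        (fun j => min h (letter u (n - (i j : ℤ) + 1)) + (letter u (n - k - (i j : ℤ) + 1) - h)) := by
      apply Finset.sup_congr rfl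
      intro j _
      rw [hV (n - (i j : ℤ) + 1)]
      congr 2
      ring
    rw [e1, sup_add_trunc hm]
    intro j hj hlt
    obtain ⟨_, _, h3⟩ := hrig (n - k - (i j : ℤ) + 1) hlt
    have e2 : n - k - (i j : ℤ) + 1 + k = n - (i j : ℤ) + 1 := by ring
    rwa [e2] at h3
  -- support of the truncated cluster
  have hsupp : ∀ t : ℤ, (CC t - h) ≠ 0 → 1 ≤ t ∧ t ≤ (N:ℤ) ∧ 1 ≤ t + k ∧ t + k ≤ (N:ℤ) := by
    intro t ht
    have hne : (Finset.Icc 1 m).Nonempty := ⟨1, by simp [Finset.mem_Icc]; omega⟩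
    obtain ⟨j0, hj0, hsj⟩ := Finset.exists_mem_eq_sup _ hne (fun j => letter u (t - (i j : ℤ) + 1))
    have hgt : h < letter u (t - (i j0 : ℤ) + 1) := by
      have : CC t = letter u (t - (i j0 : ℤ) + 1) := hsj
      omega
    have hsupport : 1 ≤ t - (i j0 : ℤ) + 1 ∧ t - (i j0 : ℤ) + 1 ≤ (u.length : ℤ) :=
      letter_support (by omega)
    obtain ⟨hr1, hr2, _⟩ := hrig _ hgt
    obtain ⟨hb1, hb2⟩ := hibounds j0 hj0
    omega
  -- convert list sums
  subst hc hd
  have hlist : ∀ g : ℤ → ℕ,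
      (List.map g (do let a ← List.range N; pure ((a:ℤ)))).sum
        = ∑ t ∈ Finset.range N, g ((t : ℕ) : ℤ) := by
    intro g
    have hb : (do let a ← List.range N; pure ((a:ℤ)))
        = (List.range N).map (fun a : ℕ => (a:ℤ)) := by
      exact List.flatMap_pure_eq_map (fun a : ℕ => (a:ℤ)) (List.range N)
    rw [hb, List.map_map, list_range_map_sum]
    rfl
  rw [hlist, hlist]
  show (∑ t ∈ Finset.range N, DD ((t:ℤ)+1)) = ∑ t ∈ Finset.range N, CC ((t:ℤ)+1)
  rw [range_sum_to_Icc N CC, range_sum_to_Icc N DD]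
  calc ∑ n ∈ Finset.Icc (1:ℤ) (N:ℤ), DD n
      = ∑ n ∈ Finset.Icc (1:ℤ) (N:ℤ), (min h (CC n) + (CC (n - k) - h)) := by
        exact Finset.sum_congr rfl (fun n _ => hDC n)
    _ = ∑ n ∈ Finset.Icc (1:ℤ) (N:ℤ), min h (CC n)
          + ∑ n ∈ Finset.Icc (1:ℤ) (N:ℤ), (CC (n - k) - h) :=
        Finset.sum_add_distrib
    _ = ∑ n ∈ Finset.Icc (1:ℤ) (N:ℤ), min h (CC n)
          + ∑ n ∈ Finset.Icc (1:ℤ) (N:ℤ), (CC n - h) := by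
        rw [sum_shift (fun t => CC t - h) k (by simpa using hsupp)]
    _ = ∑ n ∈ Finset.Icc (1:ℤ) (N:ℤ), (min h (CC n) + (CC n - h)) :=
        Finset.sum_add_distrib.symm
    _ = ∑ n ∈ Finset.Icc (1:ℤ) (N:ℤ), CC n := by
        exact Finset.sum_congr rfl (fun n _ => by omega)
end

section
/- Let m and n be positive integers with n ≥ m, and let u, v, and w be (possibly empty) words all of whose letters lie in {1, …, m}. Then the concatenated words u·m·v·n·w and u·n·v·m·w (where m and n denote single letters) are Wilf equivalent: for all N, M ∈ ℕ, the number of words of length N and letter sum M avoiding u·m·v·n·w equals the number of words of length N and letter sum M avoiding u·n·v·m·w. -/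
/-!
Both patterns arise from `r = u·m·v·m·w` by raising one of its two distinguished letters `m` to
`n`. By inclusion–exclusion over the set `S` of positions at which the pattern is required to occur,
it suffices to count, for each `S`, the words of given length and sum in which the pattern occurs
at every position of `S`. These are the words that dominate letterwise the `profile` of the pattern
and `S`, and `f ↦ f - g + g'` is a bijection between the words dominating two profiles `g`, `g'`
of equal sum. Since every letter of `r` is at most `m`, raising the letter at offset `β` raises
the profile by exactly `n - m` at the `|S|` positions `S + β` and nowhere else, so the profile sum
does not depend on which of the two letters is raised.
-/

open Finset

/-- 0-indexed occurrence of the pattern `p` in `x` at position `i`. -/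
def OccursAt (p x : List ℕ) (i : ℕ) : Prop :=
  i + p.length ≤ x.length ∧ ∀ j < p.length, p.getD j 0 ≤ x.getD (i + j) 0

instance (p x : List ℕ) : DecidablePred (OccursAt p x) := fun _ => by
  unfold OccursAt; infer_instance

theorem letter_natCast_add_one (u : List ℕ) (j : ℕ) : letter u ((j : ℤ) + 1) = u.getD j 0 := by
  simp [letter]

theorem embedsAt_add_one_iff {p x : List ℕ} {i : ℕ} : EmbedsAt p x (i + 1) ↔ OccursAt p x i := by
  simp only [EmbedsAt, OccursAt, mem_Icc]
  refine ⟨fun ⟨_, hlen, h⟩ => ⟨by omega, fun j hj => ?_⟩, fun ⟨hlen, h⟩ => ⟨by omega, by omega, ?_⟩⟩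
  · have := h (j + 1) ⟨by omega, by omega⟩
    rwa [Nat.cast_add_one, letter_natCast_add_one, show ((i + 1 : ℕ) : ℤ) + ((j : ℤ) + 1) - 1 =
      ((i + j : ℕ) : ℤ) + 1 by push_cast; ring, letter_natCast_add_one] at this
  · rintro (_ | j) ⟨hj, hjp⟩
    · omega
    · rw [Nat.cast_add_one, letter_natCast_add_one, show ((i + 1 : ℕ) : ℤ) + ((j : ℤ) + 1) - 1 =
        ((i + j : ℕ) : ℤ) + 1 by push_cast; ring, letter_natCast_add_one]
      exact h j (by omega)

theorem avoids_iff_forall_not_occursAt {p x : List ℕ} : Avoids p x ↔ ∀ i, ¬ OccursAt p x i := by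
  simp only [Avoids, ← embedsAt_add_one_iff]
  refine ⟨fun h i => h (i + 1), fun h i => ?_⟩
  cases i with
  | zero => exact fun h0 => absurd h0.1 (by omega)
  | succ i => exact h i

/-- Positive words indexed by `ι` with letter sum `M`; the bound `f i ≤ M` follows from the sum
and only serves to make this a `Finset`. -/
def words (ι : Type*) [Fintype ι] [DecidableEq ι] (M : ℕ) : Finset (ι → ℕ) :=
  {f ∈ Fintype.piFinset fun _ => Icc 1 M | ∑ i, f i = M}

theorem mem_words {ι : Type*} [Fintype ι] [DecidableEq ι] {M : ℕ} {f : ι → ℕ} :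
    f ∈ words ι M ↔ (∀ i, 1 ≤ f i) ∧ ∑ i, f i = M := by
  simp only [words, mem_filter, Fintype.mem_piFinset, mem_Icc]
  refine ⟨fun h => ⟨fun i => (h.1 i).1, h.2⟩, fun h => ⟨fun i => ⟨h.1 i, ?_⟩, h.2⟩⟩
  exact h.2 ▸ single_le_sum (fun j _ => Nat.zero_le (f j)) (mem_univ i)

theorem ncard_setOf_isWord_eq_card_words (N M : ℕ) (P : List ℕ → Prop) [DecidablePred P] :
    {w : List ℕ | IsWord w ∧ w.length = N ∧ w.sum = M ∧ P w}.ncard =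
      #{f ∈ words (Fin N) M | P (List.ofFn f)} := by
  have hset : {w : List ℕ | IsWord w ∧ w.length = N ∧ w.sum = M ∧ P w} =
      List.ofFn '' (({f ∈ words (Fin N) M | P (List.ofFn f)} : Finset _) : Set (Fin N → ℕ)) := by
    ext w
    simp only [Set.mem_ofPred_eq, Set.mem_image, coe_filter, mem_words, IsWord]
    constructor
    · rintro ⟨hw, rfl, hsum, hP⟩
      refine ⟨w.get, ⟨⟨fun i => hw _ (List.get_mem w i), ?_⟩, ?_⟩, List.ofFn_get w⟩
      · rw [← List.sum_ofFn, List.ofFn_get, hsum]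
      · rwa [List.ofFn_get]
    · rintro ⟨f, ⟨⟨hpos, hsum⟩, hP⟩, rfl⟩
      refine ⟨fun a ha => ?_, List.length_ofFn, by rwa [List.sum_ofFn], hP⟩
      obtain ⟨i, rfl⟩ := List.mem_ofFn.mp ha
      exact hpos i
  rw [hset, Set.ncard_image_of_injective _ List.ofFn_injective, Set.ncard_coe_finset]

theorem Finset.card_filter_eq_empty_eq_sum_powerset {α ι : Type*} [DecidableEq ι]
    (s : Finset α) (U : Finset ι) (T : α → Finset ι) (hT : ∀ a ∈ s, T a ⊆ U) :
    (#{a ∈ s | T a = ∅} : ℤ) = ∑ S ∈ U.powerset, (-1 : ℤ) ^ #S * #{a ∈ s | S ⊆ T a} := by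
  calc (#{a ∈ s | T a = ∅} : ℤ)
      = ∑ a ∈ s, ∑ S ∈ (T a).powerset, (-1 : ℤ) ^ #S := by
        simp [sum_powerset_neg_one_pow_card]
    _ = ∑ a ∈ s, ∑ S ∈ U.powerset, if S ⊆ T a then (-1 : ℤ) ^ #S else 0 := by
        refine sum_congr rfl fun a ha => ?_
        rw [← sum_filter]
        congr 1
        ext S
        simpa using fun h => h.trans (hT a ha)
    _ = ∑ S ∈ U.powerset, ∑ a ∈ s, if S ⊆ T a then (-1 : ℤ) ^ #S else 0 := sum_comm
    _ = ∑ S ∈ U.powerset, (-1 : ℤ) ^ #S * #{a ∈ s | S ⊆ T a} := by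
        simp [← sum_filter, mul_comm]

open scoped Classical in
theorem card_words_avoids_eq_sum_powerset (p : List ℕ) (N M : ℕ) :
    (#{f ∈ words (Fin N) M | Avoids p (List.ofFn f)} : ℤ) =
      ∑ S ∈ (range (N + 1)).powerset,
        (-1 : ℤ) ^ #S * #{f ∈ words (Fin N) M | ∀ i ∈ S, OccursAt p (List.ofFn f) i} := by
  have hmem {f : Fin N → ℕ} {i : ℕ} (h : OccursAt p (List.ofFn f) i) : i ∈ range (N + 1) := by
    have := h.1
    simp only [List.length_ofFn] at this
    exact mem_range.mpr (by omega)
  set T : (Fin N → ℕ) → Finset ℕ := fun f => {i ∈ range (N + 1) | OccursAt p (List.ofFn f) i}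
  have havoids : {f ∈ words (Fin N) M | Avoids p (List.ofFn f)} = {f ∈ words (Fin N) M | T f = ∅} :=
    filter_congr fun f _ => by
      rw [avoids_iff_forall_not_occursAt, filter_eq_empty_iff]
      exact ⟨fun h i _ => h i, fun h i hi => h (hmem hi) hi⟩
  rw [havoids, card_filter_eq_empty_eq_sum_powerset _ _ T fun _ _ => filter_subset _ _]
  refine sum_congr rfl fun S hS => ?_
  congr 3
  refine filter_congr fun f _ => ?_
  simp only [T, subset_iff, mem_filter, mem_powerset] at hS ⊢
  exact ⟨fun h i hi => (h hi).2, fun h i hi => ⟨hS hi, h i hi⟩⟩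

theorem wilfEquiv_of_card_forall_occursAt_eq {p q : List ℕ}
    (h : ∀ N M (S : Finset ℕ),
      #{f ∈ words (Fin N) M | ∀ i ∈ S, OccursAt p (List.ofFn f) i} =
        #{f ∈ words (Fin N) M | ∀ i ∈ S, OccursAt q (List.ofFn f) i}) :
    WilfEquiv p q := by
  classical
  intro N M
  rw [ncard_setOf_isWord_eq_card_words, ncard_setOf_isWord_eq_card_words]
  have hZ := card_words_avoids_eq_sum_powerset p N M
  simp only [h] at hZ
  exact_mod_cast hZ.trans (card_words_avoids_eq_sum_powerset q N M).symm

section Domination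

variable {ι : Type*} [Fintype ι] [DecidableEq ι]

theorem card_filter_le_words_le {g g' : ι → ℕ} (hg' : ∀ i, 1 ≤ g' i)
    (hsum : ∑ i, g i = ∑ i, g' i) (M : ℕ) :
    #{f ∈ words ι M | ∀ i, g i ≤ f i} ≤ #{f ∈ words ι M | ∀ i, g' i ≤ f i} := by
  refine card_le_card_of_injOn (fun f => f - g + g') (fun f hf => ?_) fun f₁ hf₁ f₂ hf₂ h => ?_
  · simp only [coe_filter, mem_words] at hf ⊢
    obtain ⟨⟨-, hfM⟩, hgf⟩ := hf
    refine ⟨⟨fun i => le_add_left (hg' i), ?_⟩, fun i => le_add_self⟩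
    simp only [Pi.add_apply, Pi.sub_apply]
    rw [sum_add_distrib, sum_tsub_distrib _ fun i _ => hgf i, hsum, hfM]
    have : ∑ i, g' i ≤ M := hsum ▸ hfM ▸ sum_le_sum fun i _ => hgf i
    omega
  · simp only [coe_filter, Set.mem_ofPred_eq] at hf₁ hf₂
    funext i
    have hi := congrFun h i
    have h₁ := hf₁.2 i
    have h₂ := hf₂.2 i
    simp only [Pi.add_apply, Pi.sub_apply] at hi
    omega

theorem card_filter_le_words_eq {g g' : ι → ℕ} (hg : ∀ i, 1 ≤ g i) (hg' : ∀ i, 1 ≤ g' i)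
    (hsum : ∑ i, g i = ∑ i, g' i) (M : ℕ) :
    #{f ∈ words ι M | ∀ i, g i ≤ f i} = #{f ∈ words ι M | ∀ i, g' i ≤ f i} :=
  (card_filter_le_words_le hg' hsum M).antisymm (card_filter_le_words_le hg hsum.symm M)

end Domination

/-- The letterwise least word, with letters at least `1`, in which `p` occurs at every position
of `S` (see `forall_occursAt_iff_profile_le`). -/
def profile (p : List ℕ) (S : Finset ℕ) (t : ℕ) : ℕ :=
  {i ∈ S | i ≤ t}.sup (fun i => p.getD (t - i) 0) ⊔ 1

theorem profile_le_iff {p : List ℕ} {S : Finset ℕ} {t a : ℕ} :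
    profile p S t ≤ a ↔ 1 ≤ a ∧ ∀ i ∈ S, i ≤ t → p.getD (t - i) 0 ≤ a := by
  simp only [profile, sup_le_iff, Finset.sup_le_iff, mem_filter, and_imp]
  exact and_comm

theorem getD_le_profile {p : List ℕ} {S : Finset ℕ} {i t : ℕ} (hi : i ∈ S) (hit : i ≤ t) :
    p.getD (t - i) 0 ≤ profile p S t :=
  (le_sup (f := fun i => p.getD (t - i) 0) (mem_filter.mpr ⟨hi, hit⟩)).trans le_sup_left

theorem one_le_profile (p : List ℕ) (S : Finset ℕ) (t : ℕ) : 1 ≤ profile p S t :=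
  le_sup_right

theorem forall_occursAt_iff_profile_le {p x : List ℕ} {S : Finset ℕ} (hx : IsWord x)
    (hS : ∀ i ∈ S, i + p.length ≤ x.length) :
    (∀ i ∈ S, OccursAt p x i) ↔ ∀ t < x.length, profile p S t ≤ x.getD t 0 := by
  simp only [profile_le_iff]
  constructor
  · intro h t ht
    refine ⟨by rw [List.getD_eq_getElem _ _ ht]; exact hx _ (List.getElem_mem ht), fun i hi hit => ?_⟩
    rcases lt_or_ge (t - i) p.length with hp | hp
    · simpa [Nat.add_sub_cancel' hit] using (h i hi).2 (t - i) hp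
    · rw [List.getD_eq_default _ _ hp]
      exact Nat.zero_le _
  · intro h i hi
    refine ⟨hS i hi, fun j hj => ?_⟩
    simpa using (h (i + j) (by linarith [hS i hi])).2 i hi (Nat.le_add_right i j)

theorem card_filter_forall_occursAt_eq {p q : List ℕ} (hlen : p.length = q.length) {N : ℕ}
    {S : Finset ℕ} (h : (∀ i ∈ S, i + p.length ≤ N) →
      ∑ t ∈ range N, profile p S t = ∑ t ∈ range N, profile q S t) (M : ℕ) :
    #{f ∈ words (Fin N) M | ∀ i ∈ S, OccursAt p (List.ofFn f) i} =
      #{f ∈ words (Fin N) M | ∀ i ∈ S, OccursAt q (List.ofFn f) i} := by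
  by_cases hS : ∀ i ∈ S, i + p.length ≤ N
  · have hprofile (r : List ℕ) (hr : ∀ i ∈ S, i + r.length ≤ N) :
        {f ∈ words (Fin N) M | ∀ i ∈ S, OccursAt r (List.ofFn f) i} =
          {f ∈ words (Fin N) M | ∀ t : Fin N, profile r S t ≤ f t} := by
      refine filter_congr fun f hf => ?_
      have hword : IsWord (List.ofFn f) := fun a ha => by
        obtain ⟨i, rfl⟩ := List.mem_ofFn.mp ha
        exact (mem_words.mp hf).1 i
      rw [forall_occursAt_iff_profile_le hword (by simpa using hr), List.length_ofFn, Fin.forall_iff]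
      refine forall₂_congr fun t ht => ?_
      rw [List.getD_eq_getElem _ _ (by simpa using ht), List.getElem_ofFn]
    rw [hprofile p hS, hprofile q (hlen ▸ hS)]
    convert card_filter_le_words_eq (fun t : Fin N => one_le_profile p S t)
      (fun t => one_le_profile q S t) ?_ M using 3
    simpa only [Fin.sum_univ_eq_sum_range (profile _ S)] using h hS
  · push Not at hS
    obtain ⟨i, hi, hiN⟩ := hS
    have hempty (r : List ℕ) (hr : r.length = p.length) :
        {f ∈ words (Fin N) M | ∀ i ∈ S, OccursAt r (List.ofFn f) i} = ∅ :=
      filter_false_of_mem fun f _ hf => by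
        have := (hf i hi).1
        simp only [List.length_ofFn, hr] at this
        omega
    rw [hempty p rfl, hempty q hlen.symm]

theorem wilfEquiv_of_sum_profile_eq {p q : List ℕ} (hlen : p.length = q.length)
    (h : ∀ N (S : Finset ℕ), (∀ i ∈ S, i + p.length ≤ N) →
      ∑ t ∈ range N, profile p S t = ∑ t ∈ range N, profile q S t) :
    WilfEquiv p q :=
  wilfEquiv_of_card_forall_occursAt_eq fun N M _ => card_filter_forall_occursAt_eq hlen (h N _) M


section RaiseLetter

variable {r : List ℕ} {m n β : ℕ}

theorem profile_set (hm : 1 ≤ m) (hmn : m ≤ n) (hr : ∀ a ∈ r, a ≤ m) (hβ : β < r.length)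
    (hrβ : r.getD β 0 = m) (S : Finset ℕ) (t : ℕ) :
    profile (r.set β n) S t = profile r S t + if t ∈ S.image (· + β) then n - m else 0 := by
  have hgetD (j : ℕ) : (r.set β n).getD j 0 = if j = β then n else r.getD j 0 := by
    by_cases hj : j = β
    · simp [hj, hβ]
    · simp [List.getD_eq_getElem?_getD, Ne.symm hj, hj]
  have hle (j : ℕ) : r.getD j 0 ≤ m := by
    rcases lt_or_ge j r.length with hj | hj
    · rw [List.getD_eq_getElem _ _ hj]
      exact hr _ (List.getElem_mem hj)
    · rw [List.getD_eq_default _ _ hj]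
      exact Nat.zero_le m
  split_ifs with ht
  · obtain ⟨i, hi, rfl⟩ := mem_image.mp ht
    have hprofile_r : profile r S (i + β) = m := by
      refine le_antisymm (profile_le_iff.mpr ⟨hm, fun _ _ _ => hle _⟩) ?_
      have := getD_le_profile (p := r) hi (Nat.le_add_right i β)
      rwa [Nat.add_sub_cancel_left, hrβ] at this
    have hprofile_set : profile (r.set β n) S (i + β) = n := by
      refine le_antisymm (profile_le_iff.mpr ⟨hm.trans hmn, fun j _ _ => ?_⟩) ?_
      · rw [hgetD]
        split_ifs
        exacts [le_rfl, (hle _).trans hmn]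
      · have := getD_le_profile (p := r.set β n) hi (Nat.le_add_right i β)
        rwa [Nat.add_sub_cancel_left, hgetD, if_pos rfl] at this
    omega
  · rw [add_zero, profile, profile]
    congr 1
    refine sup_congr rfl fun i hi => ?_
    rw [hgetD, if_neg]
    rintro h
    exact ht (mem_image.mpr ⟨i, (mem_filter.mp hi).1, by have := (mem_filter.mp hi).2; omega⟩)

theorem sum_profile_set (hm : 1 ≤ m) (hmn : m ≤ n) (hr : ∀ a ∈ r, a ≤ m) (hβ : β < r.length)
    (hrβ : r.getD β 0 = m) {N : ℕ} {S : Finset ℕ} (hS : ∀ i ∈ S, i + r.length ≤ N) :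
    ∑ t ∈ range N, profile (r.set β n) S t = ∑ t ∈ range N, profile r S t + #S * (n - m) := by
  have hsub : S.image (· + β) ⊆ range N := fun t ht => by
    obtain ⟨i, hi, rfl⟩ := mem_image.mp ht
    have := hS i hi
    exact mem_range.mpr (by omega)
  simp only [profile_set hm hmn hr hβ hrβ, sum_add_distrib, sum_ite_mem, inter_eq_right.mpr hsub,
    sum_const, card_image_of_injective _ (add_left_injective β), smul_eq_mul]

end RaiseLetter

/-- For `n ≥ m ≥ 1` and words `u, v, w` with letters in
`{1, …, m}`, the words `u·m·v·n·w` and `u·n·v·m·w` are Wilf equivalent. -/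
theorem umvnw_wilfEquiv_unvmw (m n : ℕ) (hm : 1 ≤ m) (hmn : m ≤ n)
    (u v w : List ℕ)
    (hu : ∀ x ∈ u, 1 ≤ x ∧ x ≤ m) (hv : ∀ x ∈ v, 1 ≤ x ∧ x ≤ m)
    (hw : ∀ x ∈ w, 1 ≤ x ∧ x ≤ m) :
    WilfEquiv (u ++ [m] ++ v ++ [n] ++ w) (u ++ [n] ++ v ++ [m] ++ w) := by
  set r := u ++ [m] ++ v ++ [m] ++ w
  have hr : ∀ a ∈ r, a ≤ m := by
    intro a ha
    simp only [r, List.append_assoc, List.mem_append, List.mem_singleton] at ha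
    rcases ha with ha | rfl | ha | rfl | ha
    exacts [(hu a ha).2, le_rfl, (hv a ha).2, le_rfl, (hw a ha).2]
  have hp : u ++ [m] ++ v ++ [n] ++ w = r.set (u ++ [m] ++ v).length n := by simp [r]
  have hq : u ++ [n] ++ v ++ [m] ++ w = r.set u.length n := by simp [r]
  rw [hp, hq]
  refine wilfEquiv_of_sum_profile_eq (by simp) fun N S hS => ?_
  rw [List.length_set] at hS
  rw [sum_profile_set hm hmn hr (by simp [r]) (by simp [r]) hS,
    sum_profile_set hm hmn hr (by simp [r]) (by simp [r]) hS]
end
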